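/- Let I = (u_1,…,u_r) be a monomial ideal of S = k[x_1,…,x_n]. Then I has linear quotients with respect to the sequence u_1,…,u_r if and only if the polarization I^p has linear quotients with respect to the sequence u_1^p,…,u_r^p. -/
import Mathlib


open MvPolynomial

/-- The linear quotients condition for the sequence of monomials `x^(u 0), …, x^(u (r-1))`:
for all `i < r` and all `j < i` there are a variable `x_l` and some `k < i` with
`x^(u k) / gcd(x^(u k), x^(u i)) = x_l` and `x_l ∣ x^(u j) / gcd(x^(u j), x^(u i))`. -/
def HasLinearQuotients {σ : Type} (u : ℕ → (σ →₀ ℕ)) (r : ℕ) : Prop :=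
  ∀ i < r, ∀ j < i, ∃ (l : σ) (k : ℕ), k < i ∧
    u k - u i = Finsupp.single l 1 ∧ Finsupp.single l 1 ≤ u j - u i

/-- The polarization of the exponent vector `b`: the square-free exponent vector of
`u^p = ∏_{i=1}^n ∏_{j=1}^{b i} x_{ij}` in the polynomial ring on the variables `x_{ij}`. -/
noncomputable def polarizeExp (n : ℕ) (b : Fin n →₀ ℕ) : (Fin n × ℕ) →₀ ℕ :=
  ∑ i : Fin n, ∑ j ∈ Finset.range (b i), Finsupp.single (i, j) 1

lemma polarizeExp_apply (n : ℕ) (b : Fin n →₀ ℕ) (p : Fin n × ℕ) :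
    polarizeExp n b p = if p.2 < b p.1 then 1 else 0 := by
  obtain ⟨i, j⟩ := p
  simp only [polarizeExp, Finsupp.finset_sum_apply, Finsupp.single_apply, Prod.mk.injEq]
  rw [Finset.sum_eq_single i]
  · simp
  · intro i' _ hne
    simp [hne]
  · simp

lemma polar_sub_apply (n : ℕ) (a b : Fin n →₀ ℕ) (p : Fin n × ℕ) :
    (polarizeExp n a - polarizeExp n b) p = if b p.1 ≤ p.2 ∧ p.2 < a p.1 then 1 else 0 := by
  rw [Finsupp.tsub_apply, polarizeExp_apply, polarizeExp_apply]
  split_ifs with h1 h2 h3 <;> omega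

/-- A monomial ideal `I = (u_1,…,u_r)` has linear quotients with respect to `u_1,…,u_r` if
and only if its polarization `I^p = (u_1^p,…,u_r^p)` has linear quotients with respect to
`u_1^p,…,u_r^p`. -/
theorem linearQuotients_iff_polarization (n : ℕ) (k : Type) [Field k]
    (r : ℕ) (u : ℕ → (Fin n →₀ ℕ)) (I : Ideal (MvPolynomial (Fin n) k))
    (Ip : Ideal (MvPolynomial (Fin n × ℕ) k))
    (hI : I = Ideal.span ((fun j => monomial (u j) (1 : k)) '' {j | j < r}))
    (hIp : Ip = Ideal.span ((fun j => monomial (polarizeExp n (u j)) (1 : k)) '' {j | j < r})) :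
    HasLinearQuotients u r ↔ HasLinearQuotients (fun j => polarizeExp n (u j)) r := by
  constructor
  · intro H i hi j hj
    obtain ⟨l, κ, hκ, h1, h2⟩ := H i hi j hj
    have h1' : ∀ t, u κ t - u i t = if l = t then 1 else 0 := by
      intro t
      rw [← Finsupp.tsub_apply, h1, Finsupp.single_apply]
    have hl : u κ l = u i l + 1 := by
      have := h1' l
      rw [if_pos rfl] at this
      omega
    have hoth : ∀ t, t ≠ l → u κ t ≤ u i t := by
      intro t ht
      have := h1' t; rw [if_neg (Ne.symm ht)] at this; omega
    refine ⟨(l, u i l), κ, hκ, ?_, ?_⟩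
    · ext ⟨t, j'⟩
      rw [polar_sub_apply, Finsupp.single_apply]
      dsimp only
      by_cases h : t = l
      · subst h
        simp only [Prod.mk.injEq, eq_self_iff_true, true_and]
        split_ifs with hc hd hd <;> omega
      · rw [if_neg (show ¬((l, u i l) = (t, j')) from by simp [Ne.symm h])]
        split_ifs with hc
        · have := hoth t h
          omega
        · rfl
    · rw [Finsupp.single_le_iff] at h2 ⊢
      rw [Finsupp.tsub_apply] at h2
      rw [polar_sub_apply]
      dsimp only
      rw [if_pos ⟨le_refl _, by omega⟩]
  · intro H i hi j hj
    obtain ⟨⟨l, m⟩, κ, hκ, h1, h2⟩ := H i hi j hj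
    simp only at h1 h2
    have key : ∀ (t : Fin n) (j' : ℕ), (u i t ≤ j' ∧ j' < u κ t) ↔ (t = l ∧ j' = m) := by
      intro t j'
      have h := polar_sub_apply n (u κ) (u i) (t, j')
      rw [h1, Finsupp.single_apply] at h
      dsimp only at h
      simp only [Prod.mk.injEq] at h
      by_cases ha : u i t ≤ j' ∧ j' < u κ t
      · rw [if_pos ha] at h
        split_ifs at h with hb
        exact iff_of_true ha ⟨hb.1.symm, hb.2.symm⟩
      · rw [if_neg ha] at h
        split_ifs at h with hb
        exact iff_of_false ha (fun hc => hb ⟨hc.1.symm, hc.2.symm⟩)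
    have hlm : u i l ≤ m ∧ m < u κ l := (key l m).mpr ⟨rfl, rfl⟩
    have hm : m = u i l := ((key l (u i l)).mp ⟨le_refl _, by omega⟩).2.symm
    have hkl : u κ l = u i l + 1 := by
      by_contra hne
      have := ((key l (m + 1)).mp ⟨by omega, by omega⟩).2
      omega
    have hoth : ∀ t, t ≠ l → u κ t ≤ u i t := by
      intro t ht
      by_contra hc
      exact ht ((key t (u i t)).mp ⟨le_refl _, by omega⟩).1
    refine ⟨l, κ, hκ, ?_, ?_⟩
    · ext t
      rw [Finsupp.tsub_apply, Finsupp.single_apply]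
      by_cases h : t = l
      · subst h; simp [hkl]
      · rw [if_neg (Ne.symm h)]
        have := hoth t h
        omega
    · rw [Finsupp.single_le_iff] at h2 ⊢
      rw [polar_sub_apply] at h2
      rw [Finsupp.tsub_apply]
      dsimp only at h2
      split_ifs at h2 with h
      · omega
      · omega
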